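/- arXiv:2511.00899 — 2 statements merged into one kernel-verified Lean document; each statement's English description precedes it below -/
import Mathlib

section
/- (Strong soundness, Theorem 1.) For any dataset U ⊆ V, any world w of a trustworthiness model, any set of formulas F ⊆ Φ, and any formula φ ∈ Φ, if w,U ⊩ f for each formula f ∈ F and F ⊢ φ, then w,U ⊩ φ. -/
/-- Formulas of the Dynamic Logic of Trust-Based Beliefs over data variables `V`
and atomic propositions `A`:  p | ¬φ | φ→φ | B^T_X φ | [X]φ. -/
inductive Formula (V A : Type) : Type
  | atom : A → Formula V A
  | neg  : Formula V A → Formula V A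
  | imp  : Formula V A → Formula V A → Formula V A
  | bel  : Set V → Set V → Formula V A → Formula V A   -- `bel T X φ` is B^T_X φ
  | ann  : Set V → Formula V A → Formula V A           -- `ann X φ` is [X]φ

/-- A trustworthiness model `(W, {∼ₓ}, {𝒯_w}, π)`. -/
structure TModel (V A : Type) where
  W : Type
  sim : V → W → W → Prop
  sim_equiv : ∀ x : V, Equivalence (sim x)
  trust : W → Set V
  pi : A → Set (W × Set V)

namespace TModel

variable {V A : Type} (M : TModel V A)

/-- `w ∼_X u` iff `w ∼ₓ u` for each `x ∈ X`. -/
def simSet (X : Set V) (w u : M.W) : Prop := ∀ x ∈ X, M.sim x w u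

/-- The satisfaction relation `w,U ⊩ φ`. -/
def Sat : Formula V A → M.W → Set V → Prop
  | .atom p, w, U => (w, U) ∈ M.pi p
  | .neg φ, w, U => ¬ Sat φ w U
  | .imp φ ψ, w, U => Sat φ w U → Sat ψ w U
  | .bel T X φ, w, U => ∀ w' : M.W, M.simSet (X ∪ U) w w' → T ⊆ M.trust w' → Sat φ w' U
  | .ann X φ, w, U => Sat φ w (U ∪ X)

end TModel
/-- `φ ∧ ψ`, defined through `¬` and `→` in the usual way. -/
def Formula.conj {V A : Type} (φ ψ : Formula V A) : Formula V A :=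
  .neg (.imp φ (.neg ψ))

/-- `φ ↔ ψ`, defined through `¬` and `→` in the usual way. -/
def Formula.iff {V A : Type} (φ ψ : Formula V A) : Formula V A :=
  Formula.conj (.imp φ ψ) (.imp ψ φ)

/-- Propositional tautologies in the language `Φ`: formulas true under every
assignment of truth values to formulas respecting `¬` and `→`. -/
def Tautology {V A : Type} (φ : Formula V A) : Prop :=
  ∀ v : Formula V A → Prop,
    (∀ ψ, v (.neg ψ) ↔ ¬ v ψ) →
    (∀ ψ χ, v (.imp ψ χ) ↔ (v ψ → v χ)) →
    v φ

/-- Theorems of the Dynamic Logic of Trust-Based Beliefs: `⊢ φ`. -/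
inductive Prv {V A : Type} : Formula V A → Prop
  | taut {φ : Formula V A} : Tautology φ → Prv φ
  | truth (X : Set V) (φ : Formula V A) : Prv (.imp (.bel ∅ X φ) φ)
  | distB (T X : Set V) (φ ψ : Formula V A) :
      Prv (.imp (.bel T X (.imp φ ψ)) (.imp (.bel T X φ) (.bel T X ψ)))
  | distA (X : Set V) (φ ψ : Formula V A) :
      Prv (.imp (.ann X (.imp φ ψ)) (.imp (.ann X φ) (.ann X ψ)))
  | negIntro (T X : Set V) (φ : Formula V A) :
      Prv (.imp (.neg (.bel T X φ)) (.bel ∅ X (.neg (.bel T X φ))))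
  | mono {T T' X X' : Set V} (φ : Formula V A) :
      T ⊆ T' → X ⊆ X' → Prv (.imp (.bel T X φ) (.bel T' X' φ))
  | trust (T X Y : Set V) (φ : Formula V A) : Prv (.bel T X (.imp (.bel T Y φ) φ))
  | comb (X Y : Set V) (φ : Formula V A) :
      Prv (Formula.iff (.ann X (.ann Y φ)) (.ann (X ∪ Y) φ))
  | comm (T X Y : Set V) (φ : Formula V A) :
      Prv (Formula.iff (.ann Y (.bel T X φ)) (.bel T (Y ∪ X) (.ann Y φ)))
  | dual (X : Set V) (φ : Formula V A) :
      Prv (Formula.iff (.neg (.ann X φ)) (.ann X (.neg φ)))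
  | empty (φ : Formula V A) : Prv (Formula.iff (.ann ∅ φ) φ)
  | mp {φ ψ : Formula V A} : Prv (.imp φ ψ) → Prv φ → Prv ψ
  | necB (T X : Set V) {φ : Formula V A} : Prv φ → Prv (.bel T X φ)
  | necA (X : Set V) {φ : Formula V A} : Prv φ → Prv (.ann X φ)

/-- `F ⊢ φ`: φ is derivable from theorems of the system and the set of
additional assumptions `F` using the Modus Ponens inference rule only. -/
inductive Deriv {V A : Type} (F : Set (Formula V A)) : Formula V A → Prop
  | thm {φ : Formula V A} : Prv φ → Deriv F φ
  | hyp {φ : Formula V A} : φ ∈ F → Deriv F φ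
  | mp {φ ψ : Formula V A} : Deriv F (.imp φ ψ) → Deriv F φ → Deriv F ψ

/-- A set of formulas is consistent if no formula and its negation are both derivable. -/
def Consistent {V A : Type} (F : Set (Formula V A)) : Prop :=
  ¬ ∃ φ : Formula V A, Deriv F φ ∧ Deriv F (.neg φ)

/-- A maximal consistent set: a consistent set not properly contained in any consistent set. -/
def MaxConsistent {V A : Type} (F : Set (Formula V A)) : Prop :=
  Consistent F ∧ ∀ G : Set (Formula V A), F ⊆ G → Consistent G → G = F

/-!
Every theorem of the system holds at every pair `(w, U)` of every model: the axioms are valid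
because each `∼ₓ` is an equivalence relation and `[X]` only enlarges `U`, and necessitation
preserves validity because validity quantifies over all worlds and all datasets. Modus Ponens
preserves truth at a fixed `(w, U)`, so everything derivable from `F` holds wherever `F` does.
-/

namespace TModel

variable {V A : Type} (M : TModel V A)

lemma simSet_refl (X : Set V) (w : M.W) : M.simSet X w w :=
  fun x _ => (M.sim_equiv x).refl w

variable {M}

lemma simSet.symm {X : Set V} {w u : M.W} (h : M.simSet X w u) : M.simSet X u w :=
  fun x hx => (M.sim_equiv x).symm (h x hx)

lemma simSet.trans {X : Set V} {w u v : M.W} (h₁ : M.simSet X w u) (h₂ : M.simSet X u v) :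
    M.simSet X w v :=
  fun x hx => (M.sim_equiv x).trans (h₁ x hx) (h₂ x hx)

lemma simSet.mono {X Y : Set V} (hXY : X ⊆ Y) {w u : M.W} (h : M.simSet Y w u) :
    M.simSet X w u :=
  fun x hx => h x (hXY hx)

lemma sat_conj {φ ψ : Formula V A} {w : M.W} {U : Set V} :
    M.Sat (φ.conj ψ) w U ↔ M.Sat φ w U ∧ M.Sat ψ w U := by
  simp only [Formula.conj, Sat]
  tauto

lemma sat_iff {φ ψ : Formula V A} {w : M.W} {U : Set V} :
    M.Sat (φ.iff ψ) w U ↔ (M.Sat φ w U ↔ M.Sat ψ w U) := by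
  simp only [Formula.iff, sat_conj, Sat]
  exact iff_iff_implies_and_implies.symm

lemma sat_of_tautology {φ : Formula V A} (h : Tautology φ) (w : M.W) (U : Set V) :
    M.Sat φ w U :=
  h (fun ψ => M.Sat ψ w U) (fun _ => Iff.rfl) (fun _ _ => Iff.rfl)

theorem sat_of_prv {φ : Formula V A} (h : Prv φ) (w : M.W) (U : Set V) : M.Sat φ w U := by
  induction h generalizing w U with
  | taut h => exact sat_of_tautology h w U
  | truth X φ => exact fun h => h w (M.simSet_refl _ w) (Set.empty_subset _)
  | distB T X φ ψ => exact fun h₁ h₂ w' hs ht => h₁ w' hs ht (h₂ w' hs ht)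
  | distA X φ ψ => exact id
  | negIntro T X φ =>
    -- `∼_{X∪U}` is an equivalence, so worlds `∼_{X∪U}`-related to `w` see the same worlds as `w`.
    exact fun hn w' hs _ hb => hn fun w'' hs' ht => hb w'' (hs.symm.trans hs') ht
  | mono φ hT hX =>
    exact fun h w' hs ht => h w' (hs.mono (Set.union_subset_union_left _ hX)) (hT.trans ht)
  | trust T X Y φ => exact fun w' _ ht h => h w' (M.simSet_refl _ w') ht
  | comb X Y φ => rw [sat_iff]; simp only [Sat, Set.union_assoc]
  | comm T X Y φ =>
    rw [sat_iff]
    simp only [Sat]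
    rw [show X ∪ (U ∪ Y) = Y ∪ X ∪ U by ac_rfl]
  | dual X φ => exact sat_iff.mpr Iff.rfl
  | empty φ => rw [sat_iff]; simp only [Sat, Set.union_empty]
  | mp _ _ ih₁ ih₂ => exact ih₁ w U (ih₂ w U)
  | necB T X _ ih => exact fun w' _ _ => ih w' U
  | necA X _ ih => exact ih w (U ∪ X)

end TModel

/-- Strong soundness (Theorem 1): if `w,U ⊩ f` for each `f ∈ F` and `F ⊢ φ`,
then `w,U ⊩ φ`. -/
theorem strong_soundness {V A : Type} (M : TModel V A) (w : M.W) (U : Set V)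
    (F : Set (Formula V A)) (φ : Formula V A)
    (hF : ∀ f ∈ F, M.Sat f w U) (h : Deriv F φ) :
    M.Sat φ w U := by
  induction h with
  | thm h => exact M.sat_of_prv h w U
  | hyp h => exact hF _ h
  | mp _ _ ih₁ ih₂ => exact ih₁ ih₂
end

section
/- (Single transfer, Lemma 7.) In the canonical model M(T₀,F₀), for any formula B^T_Y φ ∈ Φ and any two adjacent worlds w' = T₀,F₀,…,X_{n−1},T_{n−1},F_{n−1} and w = T₀,F₀,…,X_{n−1},T_{n−1},F_{n−1},Xₙ,Tₙ,Fₙ, if Y ⊆ Xₙ, then B^T_Y φ ∈ F(w') if and only if B^T_Y φ ∈ F(w). -/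
/-- A triple `(Xᵢ, Tᵢ, Fᵢ)` labelling one step of a canonical-model world. -/
abbrev Triple (V A : Type) := Set V × Set V × Set (Formula V A)

/-- Condition on a node labelled `T, F` of the canonical tree: `F` is a maximal
consistent set and `B^T_Y φ → φ ∈ F` for every dataset `Y` and formula `φ`. -/
def NodeOk {V A : Type} (T : Set V) (F : Set (Formula V A)) : Prop :=
  MaxConsistent F ∧ ∀ (Y : Set V) (φ : Formula V A), Formula.imp (.bel T Y φ) φ ∈ F

/-- `T(w)`: the last dataset `Tₙ` of the world `w` (worlds are written as lists of
triples with the most recent triple first; the empty list is the root `T₀, F₀`). -/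
def worldT {V A : Type} (T₀ : Set V) : List (Triple V A) → Set V
  | [] => T₀
  | (_, T, _) :: _ => T

/-- `F(w)`: the last set of formulas `Fₙ` of the world `w`. -/
def worldF {V A : Type} (F₀ : Set (Formula V A)) : List (Triple V A) → Set (Formula V A)
  | [] => F₀
  | (_, _, F) :: _ => F

/-- Worlds of the canonical model `M(T₀,F₀)`: sequences
`T₀,F₀,X₁,T₁,F₁,…,Xₙ,Tₙ,Fₙ` such that each `Fᵢ` is a maximal consistent set with
(a) `ψ ∈ Fᵢ` whenever `B^∅_{Xᵢ} ψ ∈ F_{i-1}` (for `i > 0`), and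
(b) `B^{Tᵢ}_Y φ → φ ∈ Fᵢ` for every dataset `Y` and formula `φ`. -/
def IsWorld {V A : Type} (T₀ : Set V) (F₀ : Set (Formula V A)) :
    List (Triple V A) → Prop
  | [] => NodeOk T₀ F₀
  | (X, T, F) :: rest =>
      IsWorld T₀ F₀ rest ∧ NodeOk T F ∧
        ∀ ψ : Formula V A, Formula.bel ∅ X ψ ∈ worldF F₀ rest → ψ ∈ F

/-- `u ∼ₓ v` in the canonical model: every edge along the unique simple path in the
tree between `u` and `v` is labelled with the variable `x`; equivalently, `u` and `v`
have a common ancestor `c` such that every edge between `c` and `u` and every edge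
between `c` and `v` is labelled with `x`. -/
def csim {V A : Type} (x : V) (u v : List (Triple V A)) : Prop :=
  ∃ c d₁ d₂ : List (Triple V A),
    u = d₁ ++ c ∧ v = d₂ ++ c ∧ (∀ t ∈ d₁, x ∈ t.1) ∧ (∀ t ∈ d₂, x ∈ t.1)

/-!
Both directions are transfers along condition (a) of the canonical model, which moves
`ψ` from `F(w')` to `F(w)` whenever `B^∅_{Xₙ} ψ ∈ F(w')`. Negative introspection plus
monotonicity give `¬B^T_Y φ → B^∅_{Xₙ} ¬B^T_Y φ` when `Y ⊆ Xₙ`, and the S5 argument turns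
this into positive introspection `B^T_Y φ → B^∅_{Xₙ} B^T_Y φ`. So whichever of
`B^T_Y φ`, `¬B^T_Y φ` lies in the maximal consistent set `F(w')` also lies in `F(w)`.
-/

namespace Prv

variable {V A : Type}

theorem imp_trans {φ ψ χ : Formula V A} (h₁ : Prv (.imp φ ψ)) (h₂ : Prv (.imp ψ χ)) :
    Prv (.imp φ χ) :=
  mp (mp (taut fun v _ hi => by simp only [hi]; tauto) h₁) h₂

theorem imp_neg_comm {φ ψ : Formula V A} (h : Prv (.imp φ (.neg ψ))) :
    Prv (.imp ψ (.neg φ)) :=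
  mp (taut fun v hn hi => by simp only [hi, hn]; tauto) h

theorem neg_imp_comm {φ ψ : Formula V A} (h : Prv (.imp (.neg φ) ψ)) :
    Prv (.imp (.neg ψ) φ) :=
  mp (taut fun v hn hi => by simp only [hi, hn]; tauto) h

theorem negIntro_of_subset {T Y X : Set V} (φ : Formula V A) (hY : Y ⊆ X) :
    Prv (.imp (.neg (.bel T Y φ)) (.bel ∅ X (.neg (.bel T Y φ)))) :=
  imp_trans (negIntro T Y φ) (mono _ subset_rfl hY)

/-- With `N := B^∅_X` and `B := B^T_Y φ`: `B → ¬N¬B → N¬N¬B → NB`. -/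
theorem posIntro_of_subset {T Y X : Set V} (φ : Formula V A) (hY : Y ⊆ X) :
    Prv (.imp (.bel T Y φ) (.bel ∅ X (.bel T Y φ))) :=
  imp_trans (imp_neg_comm (truth X _)) <| imp_trans (negIntro ∅ X _) <|
    mp (distB ∅ X _ _) (necB ∅ X (neg_imp_comm (negIntro_of_subset φ hY)))

end Prv

namespace Deriv

variable {V A : Type} {F : Set (Formula V A)} {φ ψ : Formula V A}

theorem of_insert (hφ : Deriv F φ) (h : Deriv (insert φ F) ψ) : Deriv F ψ := by
  induction h with
  | thm h => exact thm h
  | hyp h =>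
    rcases h with rfl | h
    · exact hφ
    · exact hyp h
  | mp _ _ ih₁ ih₂ => exact mp ih₁ ih₂

theorem imp_of_insert (h : Deriv (insert φ F) ψ) : Deriv F (.imp φ ψ) := by
  have weaken : ∀ {χ}, Deriv F χ → Deriv F (.imp φ χ) :=
    mp (thm (Prv.taut fun v _ hi => by simp only [hi]; tauto))
  induction h with
  | thm h => exact weaken (thm h)
  | hyp h =>
    rcases h with rfl | h
    · exact thm (Prv.taut fun v _ hi => by simp only [hi]; tauto)
    · exact weaken (hyp h)
  | mp _ _ ih₁ ih₂ =>
    exact mp (mp (thm (Prv.taut fun v _ hi => by simp only [hi]; tauto)) ih₁) ih₂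

end Deriv

namespace MaxConsistent

variable {V A : Type} {F : Set (Formula V A)} {φ ψ : Formula V A}

theorem mem_of_deriv (hF : MaxConsistent F) (h : Deriv F φ) : φ ∈ F := by
  have hcons : Consistent (insert φ F) := fun ⟨χ, h₁, h₂⟩ =>
    hF.1 ⟨χ, h.of_insert h₁, h.of_insert h₂⟩
  rw [← hF.2 _ (Set.subset_insert φ F) hcons]
  exact Set.mem_insert φ F

theorem mem_of_prv_imp (hF : MaxConsistent F) (h : Prv (.imp φ ψ)) (hφ : φ ∈ F) : ψ ∈ F :=
  hF.mem_of_deriv (.mp (.thm h) (.hyp hφ))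

theorem notMem_of_neg_mem (hF : MaxConsistent F) (h : Formula.neg φ ∈ F) : φ ∉ F :=
  fun hφ => hF.1 ⟨φ, .hyp hφ, .hyp h⟩

theorem neg_mem_of_notMem (hF : MaxConsistent F) (h : φ ∉ F) : Formula.neg φ ∈ F := by
  by_cases hcons : Consistent (insert φ F)
  · exact absurd (hF.2 _ (Set.subset_insert φ F) hcons ▸ Set.mem_insert φ F) h
  · obtain ⟨χ, h₁, h₂⟩ := not_not.mp hcons
    refine hF.mem_of_deriv (.mp (.mp (.thm (Prv.taut ?_)) h₁.imp_of_insert) h₂.imp_of_insert)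
    intro v hn hi
    simp only [hi, hn]
    tauto

end MaxConsistent

theorem IsWorld.maxConsistent_worldF {V A : Type} {T₀ : Set V} {F₀ : Set (Formula V A)} :
    ∀ {w : List (Triple V A)}, IsWorld T₀ F₀ w → MaxConsistent (worldF F₀ w)
  | [], h => h.1
  | _ :: _, h => h.2.1.1

/-- Single transfer (Lemma 7): for adjacent worlds `w'` and `w = w' ⌢ (Xₙ,Tₙ,Fₙ)`
of the canonical model, if `Y ⊆ Xₙ`, then `B^T_Y φ ∈ F(w')` iff `B^T_Y φ ∈ F(w)`. -/
theorem single_transfer {V A : Type} (T₀ : Set V) (F₀ : Set (Formula V A))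
    (w' : List (Triple V A)) (Xₙ Tₙ : Set V) (Fₙ : Set (Formula V A))
    (hw : IsWorld T₀ F₀ ((Xₙ, Tₙ, Fₙ) :: w'))
    (T Y : Set V) (φ : Formula V A) (hY : Y ⊆ Xₙ) :
    Formula.bel T Y φ ∈ worldF F₀ w' ↔ Formula.bel T Y φ ∈ Fₙ := by
  obtain ⟨hw', ⟨hFₙ, -⟩, htransfer⟩ := hw
  have hF' := hw'.maxConsistent_worldF
  refine ⟨fun h => htransfer _ (hF'.mem_of_prv_imp (Prv.posIntro_of_subset φ hY) h), ?_⟩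
  intro h
  by_contra hnot
  have hneg := hF'.mem_of_prv_imp (Prv.negIntro_of_subset φ hY) (hF'.neg_mem_of_notMem hnot)
  exact hFₙ.notMem_of_neg_mem (htransfer _ hneg) h
end
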